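/- Under Hypothesis (H), the rational function f = P/Q admits a telescoper of order at most d_y* = deg_y(Q*): there exist η_0, …, η_ρ in k(x), not all zero, with ρ ≤ d_y*, and g in k(x,y), such that Σ_{i=0}^{ρ} η_i·D_x^i(f) = D_y(g). In particular, every minimal telescoper for f has order at most d_y*. -/

import Mathlib

/-!
Since `Q` divides `q · (Q*)^m`, every derivative `D_x^i (P/Q)` is a fraction whose denominator
divides a power of `Q*`. Over `k(x)`, `Q*` is still squarefree (Gauss's lemma), hence coprime to
its `y`-derivative, so Hermite reduction writes each such fraction as `r_i / Q* + D_y g_i` with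
`deg_y r_i < d_y*`. The `d_y* + 1` remainders `r_0, …, r_{d_y*}` are linearly dependent over `k(x)`,
and a dependency `η` gives `Σ η_i D_x^i f = D_y (Σ η_i g_i)`; dropping trailing zero coefficients
leaves a telescoper of order at most `d_y*`, which also bounds the order of a minimal one.
-/

open Polynomial

noncomputable section

/-- A map is a derivation: it is additive and satisfies the Leibniz rule. -/
def IsDeriv {F : Type*} [CommRing F] (D : F → F) : Prop :=
  (∀ a b, D (a + b) = D a + D b) ∧ ∀ a b, D (a * b) = a * D b + b * D a

/-- Degree in `x` of an element of `k[x][y]` (inner variable `x`, outer variable `y`). -/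
def degX {k : Type*} [Field k] (Q : Polynomial (Polynomial k)) : ℕ :=
  Q.support.sup fun i => (Q.coeff i).natDegree

/-- Partial derivative with respect to `x` on `k[x][y]`. -/
def derivX {k : Type*} [Field k] (Q : Polynomial (Polynomial k)) : Polynomial (Polynomial k) :=
  Q.sum fun i a => Polynomial.C (Polynomial.derivative a) * Polynomial.X ^ i

/-- The embedding `k[x][y] → k(x)(y)`. -/
def toF {k : Type*} [Field k] : Polynomial (Polynomial k) →+* RatFunc (RatFunc k) :=
  (algebraMap (Polynomial (RatFunc k)) (RatFunc (RatFunc k))).comp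
    (Polynomial.mapRingHom (algebraMap (Polynomial k) (RatFunc k)))

/-- The embedding `k(x) → k(x)(y)`. -/
def ratToF {k : Type*} [Field k] : RatFunc k →+* RatFunc (RatFunc k) :=
  (algebraMap (Polynomial (RatFunc k)) (RatFunc (RatFunc k))).comp
    (Polynomial.C : RatFunc k →+* Polynomial (RatFunc k))

/-- The embedding `k(x)[y] → k(x)(y)`. -/
def kyToF {k : Type*} [Field k] : Polynomial (RatFunc k) →+* RatFunc (RatFunc k) :=
  algebraMap (Polynomial (RatFunc k)) (RatFunc (RatFunc k))

/-- The embedding `k[x][y] → k(x)[y]`. -/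
def toKy {k : Type*} [Field k] : Polynomial (Polynomial k) →+* Polynomial (RatFunc k) :=
  Polynomial.mapRingHom (algebraMap (Polynomial k) (RatFunc k))

/-- The embedding `k[y] → k[x][y]` (a polynomial in `y` viewed in `k[x][y]`). -/
def yToXY {k : Type*} [Field k] : Polynomial k →+* Polynomial (Polynomial k) :=
  Polynomial.mapRingHom (Polynomial.C : k →+* Polynomial k)

/-- The Hermite matrix associated with a factorisation `Q = Qs * Qneg`, with respect to the
monomial bases: its columns are the coefficient vectors (in `y`, coefficients in `k[x]`) of
`Qs * D_y(y^j) - E * y^j` for `j < dm` (where `E = Qs * D_y(Qneg) / Qneg`) and of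
`Qneg * y^j` for `j < dy - dm`. -/
def hermiteMat {k : Type*} [Field k] (Qs Qneg E : Polynomial (Polynomial k)) (dy dm : ℕ) :
    Matrix (Fin dy) (Fin dy) (Polynomial k) :=
  Matrix.of fun i j =>
    if (j : ℕ) < dm then
      (Qs * Polynomial.derivative (Polynomial.X ^ (j : ℕ)) - E * Polynomial.X ^ (j : ℕ)).coeff i
    else
      (Qneg * Polynomial.X ^ ((j : ℕ) - dm)).coeff i

theorem Finset.prod_pow_succ_dvd_prod_pow {M : Type*} [CommMonoid M] (a : ℕ → M) (m : ℕ) :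
    ∏ i ∈ range m, a i ^ (i + 1) ∣ (∏ i ∈ range m, a i) ^ m := by
  rw [← Finset.prod_pow]
  exact Finset.prod_dvd_prod_of_dvd _ _ fun i hi => pow_dvd_pow _ (mem_range.1 hi)

theorem Polynomial.map_dvd_map_prod_pow {R K : Type*} [CommRing R] [Field K] {f : R →+* K}
    (hf : Function.Injective f) {q : R} (hq : q ≠ 0) (Qi : ℕ → R[X]) (m : ℕ) :
    (C q * ∏ i ∈ Finset.range m, Qi i ^ (i + 1)).map f ∣
      ((∏ i ∈ Finset.range m, Qi i).map f) ^ m := by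
  have hunit : IsUnit ((C q).map f) := by
    rw [map_C]
    exact isUnit_C.2 ((map_ne_zero_iff f hf).2 hq).isUnit
  rw [Polynomial.map_mul, hunit.mul_left_dvd, ← Polynomial.map_pow]
  exact Polynomial.map_dvd f (Finset.prod_pow_succ_dvd_prod_pow Qi m)

open scoped nonZeroDivisors in
theorem Squarefree.map_algebraMap_fraction {R K : Type*} [CommRing R] [IsDomain R]
    [NormalizedGCDMonoid R] [Field K] [Algebra R K] [IsFractionRing R K] {p : R[X]}
    (hp : Squarefree p) : Squarefree (p.map (algebraMap R K)) := by
  intro d hd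
  have hd0 : d ≠ 0 := by
    rintro rfl
    exact hp.ne_zero (map_injective _ (IsFractionRing.injective R K) (by simpa using hd))
  -- `n.primPart` is a primitive associate of `d` over `R`, so Gauss's lemma pulls `d * d ∣ p` back.
  set n := IsLocalization.integerNormalization R⁰ d
  obtain ⟨c, hc0, hc⟩ := IsLocalization.integerNormalization_spec R⁰ d
  have hcd : n.map (algebraMap R K) = C (algebraMap R K c) * d := by
    rw [hc, Algebra.smul_def, Polynomial.algebraMap_apply]
  have he : n.primPart.map (algebraMap R K) ∣ d := by
    have hunit : IsUnit (C (algebraMap R K c)) :=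
      isUnit_C.2 (IsFractionRing.to_map_ne_zero_of_mem_nonZeroDivisors hc0).isUnit
    rw [← hunit.dvd_mul_left, ← hcd]
    exact Polynomial.map_dvd _ n.primPart_dvd
  have hee : n.primPart * n.primPart ∣ p :=
    (n.isPrimitive_primPart.mul n.isPrimitive_primPart).dvd_of_fraction_map_dvd_fraction_map
      (K := K) (by rw [Polynomial.map_mul]; exact (mul_dvd_mul he he).trans hd)
  exact isUnit_or_eq_zero_of_isUnit_integerNormalization_primPart hd0 (hp _ hee)

theorem Polynomial.exists_derivative_eq {F : Type*} [Field F] [CharZero F] (A : F[X]) :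
    ∃ B, derivative B = A := by
  induction A using Polynomial.induction_on' with
  | add p q hp hq =>
    obtain ⟨P, rfl⟩ := hp
    obtain ⟨Q, rfl⟩ := hq
    exact ⟨P + Q, derivative_add⟩
  | monomial n a =>
    refine ⟨monomial (n + 1) (a / (n + 1)), ?_⟩
    rw [derivative_monomial]
    push_cast
    rw [div_mul_cancel₀ a (Nat.cast_add_one_ne_zero n)]

theorem Polynomial.exists_sum_smul_eq_zero_of_degree_lt {F ι : Type*} [Field F] [Fintype ι]
    {d : ℕ} (hd : d < Fintype.card ι) (r : ι → F[X]) (hr : ∀ i, (r i).degree < d) :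
    ∃ η : ι → F, (∃ i, η i ≠ 0) ∧ ∑ i, η i • r i = 0 := by
  let v : ι → degreeLT F d := fun i => ⟨r i, mem_degreeLT.2 (hr i)⟩
  have hv : ¬ LinearIndependent F v := fun h => by
    have := h.fintype_card_le_finrank
    rw [(degreeLTEquiv F d).finrank_eq, Module.finrank_fin_fun] at this
    omega
  obtain ⟨η, hsum, i, hi⟩ := Fintype.not_linearIndependent_iff.1 hv
  exact ⟨η, ⟨i, hi⟩, by simpa [v] using congrArg Subtype.val hsum⟩

theorem Fin.exists_last_ne_zero_sum_eq {F M : Type*} [Zero F] [AddCommMonoid M]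
    (t : ℕ → F → M) (ht : ∀ i, t i 0 = 0) {d : ℕ} (η : Fin (d + 1) → F)
    (hη : ∃ i, η i ≠ 0) :
    ∃ ρ ≤ d, ∃ η' : Fin (ρ + 1) → F,
      η' (Fin.last ρ) ≠ 0 ∧ ∑ i : Fin (ρ + 1), t i (η' i) = ∑ i : Fin (d + 1), t i (η i) := by
  induction d with
  | zero =>
    obtain ⟨i, hi⟩ := hη
    exact ⟨0, le_rfl, η, by rwa [Subsingleton.elim (α := Fin 1) i (Fin.last 0)] at hi, rfl⟩
  | succ d ih =>
    by_cases hlast : η (Fin.last (d + 1)) = 0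
    · obtain ⟨i, hi⟩ := hη
      obtain ⟨i, rfl⟩ := Fin.exists_castSucc_eq.2 (ne_of_apply_ne η (hlast ▸ hi))
      obtain ⟨ρ, hρ, η', hη', hsum⟩ := ih (η ∘ Fin.castSucc) ⟨i, hi⟩
      refine ⟨ρ, hρ.trans d.le_succ, η', hη', ?_⟩
      rw [hsum, Fin.sum_univ_castSucc (n := d + 1), hlast, ht, add_zero]
      rfl
    · exact ⟨d + 1, le_rfl, η, hlast, rfl⟩

def IsDeriv.toDerivation {F : Type*} [CommRing F] {D : F → F} (hD : IsDeriv D) :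
    Derivation ℤ F F :=
  Derivation.mk' (AddMonoidHom.mk' D hD.1).toIntLinearMap hD.2

theorem exists_iterate_div_eq_div_pow {R K : Type*} [CommRing R] [Field K] (φ : R →+* K)
    (d : R → R) (D : Derivation ℤ K K) (hDφ : ∀ a, D (φ a) = φ (d a)) (p : R) {q : R}
    (hq : φ q ≠ 0) (i : ℕ) : ∃ a, D^[i] (φ p / φ q) = φ a / φ q ^ (i + 1) := by
  induction i with
  | zero => exact ⟨p, by simp⟩
  | succ i ih =>
    obtain ⟨a, ha⟩ := ih
    refine ⟨d a * q - (i + 1) * a * d q, ?_⟩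
    rw [Function.iterate_succ_apply', ha, D.leibniz_div, D.leibniz_pow, hDφ, hDφ]
    simp only [smul_eq_mul, nsmul_eq_mul, map_sub, map_mul, map_add, map_natCast, map_one,
      Nat.add_sub_cancel]
    field_simp
    push_cast
    ring

theorem Polynomial.ne_zero_of_isCoprime_derivative {R : Type*} [CommRing R] [Nontrivial R]
    {B : R[X]} (hB : IsCoprime B (derivative B)) : B ≠ 0 := by
  rintro rfl
  exact not_isUnit_zero (isCoprime_zero_left.1 hB)

section Hermite

variable {F K : Type*} [Field F] [CharZero F] [Field K] {φ : F[X] →+* K} {D : Derivation ℤ K K}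
  {B : F[X]}

theorem exists_div_pow_succ_eq_div_pow_add_derivation (hφ : Function.Injective φ)
    (hDφ : ∀ A, D (φ A) = φ (derivative A)) (hB : IsCoprime B (derivative B)) {n : ℕ}
    (hn : n ≠ 0) (A : F[X]) :
    ∃ (A' : F[X]) (g : K), φ A / φ B ^ (n + 1) = φ A' / φ B ^ n + D g := by
  have hb : φ B ≠ 0 := (map_ne_zero_iff φ hφ).2 (ne_zero_of_isCoprime_derivative hB)
  obtain ⟨s, t, hst⟩ := hB
  obtain ⟨n, rfl⟩ : ∃ n', n = n' + 1 := ⟨n - 1, by omega⟩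
  set c : F := ((n : F) + 1)⁻¹
  have hc : φ (C c) * (n + 1 : K) = 1 := by
    rw [← Nat.cast_succ, ← map_natCast φ, ← map_mul, ← C_eq_natCast, Nat.cast_succ, ← C_mul,
      inv_mul_cancel₀ n.cast_add_one_ne_zero, C_1, map_one]
  have hDc : D (φ (C c)) = 0 := by rw [hDφ, derivative_C, map_zero]
  have hA : φ A = φ (A * s) * φ B + φ (A * t) * φ (derivative B) := by
    rw [← map_mul, ← map_mul, ← map_add]
    congr 1
    linear_combination (-A) * hst
  -- Writing `A = aB + bB'` (from `sB + tB' = 1`):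
  -- `bB'/B^(n+2) = (b'/B^(n+1) - D(b/B^(n+1)))/(n+1)`.
  refine ⟨A * s + C c * derivative (A * t), -(φ (C c) * (φ (A * t) / φ B ^ (n + 1))), ?_⟩
  rw [D.map_neg, D.leibniz, hDc, D.leibniz_div, D.leibniz_pow, hDφ, hDφ, hA]
  simp only [smul_eq_mul, nsmul_eq_mul, map_add, map_mul, Nat.add_sub_cancel, Nat.cast_succ]
  field_simp
  linear_combination (-(φ B ^ (n + 2) * φ A * φ t * φ B ^ n * φ (derivative B))) * hc

theorem exists_div_pow_eq_div_add_derivation (hφ : Function.Injective φ)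
    (hDφ : ∀ A, D (φ A) = φ (derivative A)) (hB : IsCoprime B (derivative B)) (n : ℕ)
    (A : F[X]) : ∃ (r : F[X]) (g : K), r.degree < B.degree ∧ φ A / φ B ^ n = φ r / φ B + D g := by
  have hB0 := ne_zero_of_isCoprime_derivative hB
  have hb : φ B ≠ 0 := (map_ne_zero_iff φ hφ).2 hB0
  suffices h : ∀ n A, ∃ (r : F[X]) (g : K),
      r.degree < B.degree ∧ φ A / φ B ^ (n + 1) = φ r / φ B + D g by
    cases n with
    | zero => simpa [mul_div_cancel_right₀ _ hb] using h 0 (A * B)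
    | succ n => exact h n A
  intro n
  induction n with
  | zero =>
    intro A
    obtain ⟨G, hG⟩ := exists_derivative_eq (A / B)
    refine ⟨A % B, φ G, degree_mod_lt A hB0, ?_⟩
    conv_lhs => rw [← EuclideanDomain.div_add_mod A B]
    rw [hDφ, hG, pow_one, map_add, map_mul]
    field_simp
    ring
  | succ n ih =>
    intro A
    obtain ⟨A', g, hA'⟩ :=
      exists_div_pow_succ_eq_div_pow_add_derivation hφ hDφ hB n.succ_ne_zero A
    obtain ⟨r, g', hr, hr'⟩ := ih A'
    exact ⟨r, g' + g, hr, by rw [hA', hr', D.map_add, add_assoc]⟩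

theorem exists_div_eq_div_add_derivation_of_dvd_pow (hφ : Function.Injective φ)
    (hDφ : ∀ A, D (φ A) = φ (derivative A)) (hB : IsCoprime B (derivative B)) {Q : F[X]}
    {n : ℕ} (hQ : Q ∣ B ^ n) (A : F[X]) :
    ∃ (r : F[X]) (g : K), r.degree < B.degree ∧ φ A / φ Q = φ r / φ B + D g := by
  obtain ⟨R, hR⟩ := hQ
  have hR0 : φ R ≠ 0 := (map_ne_zero_iff φ hφ).2 <|
    right_ne_zero_of_mul (hR ▸ pow_ne_zero n (ne_zero_of_isCoprime_derivative hB))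
  obtain ⟨r, g, hr, h⟩ := exists_div_pow_eq_div_add_derivation hφ hDφ hB n (A * R)
  refine ⟨r, g, hr, ?_⟩
  rw [← h, ← map_pow, hR, map_mul, map_mul, mul_div_mul_right _ _ hR0]

theorem exists_sum_C_mul_eq_derivation (hφ : Function.Injective φ)
    (hDφ : ∀ A, D (φ A) = φ (derivative A)) (hB : IsCoprime B (derivative B)) {ι : Type*}
    [Fintype ι] (hcard : B.natDegree < Fintype.card ι) (f : ι → K)
    (hf : ∀ i, ∃ (A Q : F[X]) (n : ℕ), Q ∣ B ^ n ∧ f i = φ A / φ Q) :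
    ∃ η : ι → F, (∃ i, η i ≠ 0) ∧ ∃ g, ∑ i, φ (C (η i)) * f i = D g := by
  choose A Q n hQ hfA using hf
  choose r g hr hfr using fun i =>
    exists_div_eq_div_add_derivation_of_dvd_pow hφ hDφ hB (hQ i) (A i)
  obtain ⟨η, hη, hsum⟩ := exists_sum_smul_eq_zero_of_degree_lt hcard r
    fun i => (hr i).trans_le degree_le_natDegree
  refine ⟨η, hη, ∑ i, φ (C (η i)) * g i, ?_⟩
  have hDsum : D (∑ i, φ (C (η i)) * g i) = ∑ i, φ (C (η i)) * D (g i) := by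
    simp [D.leibniz, hDφ]
  calc ∑ i, φ (C (η i)) * f i
      = ∑ i, (φ (η i • r i) / φ B + φ (C (η i)) * D (g i)) := by
        simp only [hfA, hfr, smul_eq_C_mul, map_mul, mul_add, mul_div_assoc]
    _ = φ (∑ i, η i • r i) / φ B + D (∑ i, φ (C (η i)) * g i) := by
        rw [Finset.sum_add_distrib, ← Finset.sum_div, map_sum, hDsum]
    _ = D (∑ i, φ (C (η i)) * g i) := by rw [hsum, map_zero, zero_div, zero_add]

end Hermite

theorem kyToF_injective {k : Type*} [Field k] : Function.Injective (kyToF (k := k)) :=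
  IsFractionRing.injective _ _

theorem toF_injective {k : Type*} [Field k] : Function.Injective (toF (k := k)) := fun _ _ h =>
  map_injective _ (RatFunc.algebraMap_injective k) (kyToF_injective h)

theorem exists_iterate_derivX_div_eq_div {k : Type*} [Field k]
    {Dx : RatFunc (RatFunc k) → RatFunc (RatFunc k)} (hDx : IsDeriv Dx)
    (hDxval : ∀ A : Polynomial (Polynomial k), Dx (toF A) = toF (derivX A))
    (P : Polynomial (Polynomial k)) {Q : Polynomial (Polynomial k)} (hQ : Q ≠ 0)
    {B : Polynomial (RatFunc k)} {m : ℕ} (hQB : toKy Q ∣ B ^ m) (i : ℕ) :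
    ∃ (A Q' : Polynomial (RatFunc k)) (n : ℕ),
      Q' ∣ B ^ n ∧ Dx^[i] (toF P / toF Q) = kyToF A / kyToF Q' := by
  obtain ⟨a, ha⟩ := exists_iterate_div_eq_div_pow toF derivX hDx.toDerivation hDxval P
    ((map_ne_zero_iff _ toF_injective).2 hQ) i
  refine ⟨toKy a, toKy Q ^ (i + 1), m * (i + 1), ?_, by rw [map_pow]; exact ha⟩
  rw [pow_mul]
  exact pow_dvd_pow_of_dvd hQB _

theorem stmt_9_general {k : Type*} [Field k] [CharZero k]
    (P Q : Polynomial (Polynomial k))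
    (hQ : Q ≠ 0)
    (m : ℕ) (q : Polynomial k) (Qi : ℕ → Polynomial (Polynomial k))
    (hfac : Q = Polynomial.C q * ∏ i ∈ Finset.range m, Qi i ^ (i + 1))
    (hQisqf : ∀ i < m, Squarefree (Qi i))
    (hQicop : ∀ i < m, ∀ j < m, i ≠ j → IsRelPrime (Qi i) (Qi j))
    (Qs : Polynomial (Polynomial k))
    (hQs : Qs = ∏ i ∈ Finset.range m, Qi i)
    (Dy : RatFunc (RatFunc k) → RatFunc (RatFunc k)) (hDy : IsDeriv Dy)
    (hDyval : ∀ A : Polynomial (RatFunc k), Dy (kyToF A) = kyToF (Polynomial.derivative A))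
    (Dx : RatFunc (RatFunc k) → RatFunc (RatFunc k)) (hDx : IsDeriv Dx)
    (hDxval : ∀ A : Polynomial (Polynomial k), Dx (toF A) = toF (derivX A)) :
    (∃ ρ ≤ Qs.natDegree, ∃ η : Fin (ρ + 1) → RatFunc k, (∃ i, η i ≠ 0) ∧
      ∃ g : RatFunc (RatFunc k),
        ∑ i : Fin (ρ + 1), ratToF (η i) * Dx^[(i : ℕ)] (toF P / toF Q) = Dy g) ∧
    (∀ (ρ : ℕ) (η : Fin (ρ + 1) → RatFunc k), η (Fin.last ρ) ≠ 0 →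
      (∃ g : RatFunc (RatFunc k),
        ∑ i : Fin (ρ + 1), ratToF (η i) * Dx^[(i : ℕ)] (toF P / toF Q) = Dy g) →
      (∀ (ρ' : ℕ) (η' : Fin (ρ' + 1) → RatFunc k), η' (Fin.last ρ') ≠ 0 →
        (∃ g' : RatFunc (RatFunc k),
          ∑ i : Fin (ρ' + 1), ratToF (η' i) * Dx^[(i : ℕ)] (toF P / toF Q) = Dy g') →
        ρ ≤ ρ') →
      ρ ≤ Qs.natDegree) := by
  classical
  have hsep : IsCoprime (toKy Qs) (derivative (toKy Qs)) := by
    refine PerfectField.separable_iff_squarefree.2 (Squarefree.map_algebraMap_fraction ?_)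
    rw [hQs]
    exact Finset.squarefree_prod_of_pairwise_isCoprime
      (fun i hi j hj hij => hQicop i (Finset.mem_range.1 hi) j (Finset.mem_range.1 hj) hij)
      fun i hi => hQisqf i (Finset.mem_range.1 hi)
  have hdvd : toKy Q ∣ toKy Qs ^ m := by
    have hq : q ≠ 0 := by
      rintro rfl
      exact hQ (by simpa using hfac)
    rw [hfac, hQs]
    exact map_dvd_map_prod_pow (RatFunc.algebraMap_injective k) hq Qi m
  obtain ⟨η, hη, g, hg⟩ := exists_sum_C_mul_eq_derivation (D := hDy.toDerivation)
    kyToF_injective hDyval hsep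
    (by simp [toKy, natDegree_map_eq_of_injective (RatFunc.algebraMap_injective k)])
    (fun i : Fin (Qs.natDegree + 1) => Dx^[i] (toF P / toF Q))
    fun i => exists_iterate_derivX_div_eq_div hDx hDxval P hQ hdvd i
  obtain ⟨ρ, hρ, η', hlast, hsum⟩ := Fin.exists_last_ne_zero_sum_eq
    (fun i c => ratToF c * Dx^[i] (toF P / toF Q)) (by simp) η hη
  have htel := hsum.trans hg
  exact ⟨⟨ρ, hρ, η', ⟨_, hlast⟩, g, htel⟩,
    fun _ _ _ _ hmin => (hmin ρ η' hlast ⟨g, htel⟩).trans hρ⟩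

/-- Corollary `cor:upperbound`. Under Hypothesis (H), `f = P/Q` admits a
telescoper of order at most `d_y* = deg_y(Q*)`; in particular every minimal telescoper for `f`
has order at most `d_y*`. -/
theorem stmt_9 {k : Type*} [Field k] [CharZero k]
    (P Q : Polynomial (Polynomial k))
    (hP : P ≠ 0) (hQ : Q ≠ 0)
    (hPQdeg : P.degree < Q.degree)
    (hPQcop : IsRelPrime P Q)
    (hQprimY : Q.IsPrimitive)
    (m : ℕ) (hm : 0 < m) (q : Polynomial k) (Qi : ℕ → Polynomial (Polynomial k))
    (hfac : Q = Polynomial.C q * ∏ i ∈ Finset.range m, Qi i ^ (i + 1))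
    (hQiprim : ∀ i < m, (Qi i).IsPrimitive)
    (hQisqf : ∀ i < m, Squarefree (Qi i))
    (hQicop : ∀ i < m, ∀ j < m, i ≠ j → IsRelPrime (Qi i) (Qi j))
    (hQim : 0 < (Qi (m - 1)).natDegree)
    (Qs Qneg : Polynomial (Polynomial k))
    (hQs : Qs = ∏ i ∈ Finset.range m, Qi i)
    (hQneg : Q = Qs * Qneg)
    (Dy : RatFunc (RatFunc k) → RatFunc (RatFunc k)) (hDy : IsDeriv Dy)
    (hDyval : ∀ A : Polynomial (RatFunc k), Dy (kyToF A) = kyToF (Polynomial.derivative A))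
    (Dx : RatFunc (RatFunc k) → RatFunc (RatFunc k)) (hDx : IsDeriv Dx)
    (hDxval : ∀ A : Polynomial (Polynomial k), Dx (toF A) = toF (derivX A)) :
    (∃ ρ ≤ Qs.natDegree, ∃ η : Fin (ρ + 1) → RatFunc k, (∃ i, η i ≠ 0) ∧
      ∃ g : RatFunc (RatFunc k),
        ∑ i : Fin (ρ + 1), ratToF (η i) * Dx^[(i : ℕ)] (toF P / toF Q) = Dy g) ∧
    (∀ (ρ : ℕ) (η : Fin (ρ + 1) → RatFunc k), η (Fin.last ρ) ≠ 0 →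
      (∃ g : RatFunc (RatFunc k),
        ∑ i : Fin (ρ + 1), ratToF (η i) * Dx^[(i : ℕ)] (toF P / toF Q) = Dy g) →
      (∀ (ρ' : ℕ) (η' : Fin (ρ' + 1) → RatFunc k), η' (Fin.last ρ') ≠ 0 →
        (∃ g' : RatFunc (RatFunc k),
          ∑ i : Fin (ρ' + 1), ratToF (η' i) * Dx^[(i : ℕ)] (toF P / toF Q) = Dy g') →
        ρ ≤ ρ') →
      ρ ≤ Qs.natDegree) :=
  stmt_9_general P Q hQ m q Qi hfac hQisqf hQicop Qs hQs Dy hDy hDyval Dx hDx hDxval
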